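/- Let (E, ‖·‖) be a real Banach space, T > 0, S ⊆ E, and Q : S → E an operator satisfying the one-sided Lipschitz condition: there is C > 0 such that [Q[u] − Q[v], u − v] ≤ C‖u − v‖ for all u, v ∈ S, where [φ, ψ] = lim_{h→0^−} h^{−1}(‖ψ + hφ‖ − ‖ψ‖). If u, v : [0,T] → S are continuous, differentiable on (0,T), satisfy u'(t) = Q[u(t)] and v'(t) = Q[v(t)] for all t ∈ (0,T), and u(0) = v(0), then u(t) = v(t) for all t ∈ [0,T]. -/

import Mathlib

open MeasureTheory Metric Set Filter
open scoped Topology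

noncomputable section

/-- The one-sided bracket `[φ, ψ] = lim_{h→0⁻} h⁻¹(‖ψ + hφ‖ - ‖ψ‖)`. -/
def bracket {E : Type*} [NormedAddCommGroup E] [NormedSpace ℝ E] (φ ψ : E) : ℝ :=
  limUnder (𝓝[<] (0 : ℝ)) fun h : ℝ => h⁻¹ * (‖ψ + h • φ‖ - ‖ψ‖)

lemma slope_le_bracket' {E : Type*} [NormedAddCommGroup E] [NormedSpace ℝ E]
    (φ ψ : E) {h : ℝ} (hh : h < 0) :
    h⁻¹ * (‖ψ + h • φ‖ - ‖ψ‖) ≤ bracket φ ψ := by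
  set q : ℝ → ℝ := fun t => ‖ψ + t • φ‖ with hqdef
  have hq0 : q 0 = ‖ψ‖ := by simp [hqdef]
  have hconv : ConvexOn ℝ univ q := by
    refine ⟨convex_univ, fun x _ y _ a b ha hb hab => ?_⟩
    have key : ψ + (a • x + b • y) • φ = a • (ψ + x • φ) + b • (ψ + y • φ) := by
      have h2 : a • (ψ + x • φ) + b • (ψ + y • φ) = (a + b) • ψ + (a * x + b * y) • φ := by
        module
      rw [h2, hab, one_smul]; simp [smul_eq_mul]
    calc q (a • x + b • y) = ‖a • (ψ + x • φ) + b • (ψ + y • φ)‖ := by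
          rw [hqdef]; simp only; rw [key]
      _ ≤ ‖a • (ψ + x • φ)‖ + ‖b • (ψ + y • φ)‖ := norm_add_le _ _
      _ = a * q x + b * q y := by
          rw [norm_smul, norm_smul, Real.norm_eq_abs, Real.norm_eq_abs, abs_of_nonneg ha,
            abs_of_nonneg hb]
  have hmono : MonotoneOn (slope q 0) (Iio 0) :=
    (hconv.slope_mono (mem_univ 0)).mono (fun z hz => ⟨mem_univ z, ne_of_lt hz⟩)
  have hslope_eq : ∀ z : ℝ, slope q 0 z = z⁻¹ * (‖ψ + z • φ‖ - ‖ψ‖) := by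
    intro z
    rw [slope_def_field, hq0, div_eq_inv_mul, sub_zero]
  have hbdd : BddAbove (slope q 0 '' Iio 0) := by
    refine ⟨‖φ‖, fun y hy => ?_⟩
    obtain ⟨z, hz, rfl⟩ := hy
    have hz0 : (z : ℝ) < 0 := hz
    have h1 : ‖ψ‖ ≤ ‖ψ + z • φ‖ + ‖z • φ‖ := by
      calc ‖ψ‖ = ‖(ψ + z • φ) - z • φ‖ := by rw [add_sub_cancel_right]
        _ ≤ ‖ψ + z • φ‖ + ‖z • φ‖ := norm_sub_le _ _
    have h2 : ‖z • φ‖ = -z * ‖φ‖ := by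
      rw [norm_smul, Real.norm_eq_abs, abs_of_neg hz0]
    rw [hslope_eq]
    have hD : z * ‖φ‖ ≤ ‖ψ + z • φ‖ - ‖ψ‖ := by linarith
    have hle := mul_le_mul_of_nonpos_left hD (inv_nonpos.mpr hz0.le)
    have h3 : z⁻¹ * (z * ‖φ‖) = ‖φ‖ := by
      rw [← mul_assoc, inv_mul_cancel₀ (ne_of_lt hz0), one_mul]
    linarith
  have htend : Tendsto (slope q 0) (𝓝[<] (0:ℝ)) (𝓝 (sSup (slope q 0 '' Iio 0))) :=
    hmono.tendsto_nhdsLT hbdd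
  have htend' : Tendsto (fun z : ℝ => z⁻¹ * (‖ψ + z • φ‖ - ‖ψ‖)) (𝓝[<] (0:ℝ))
      (𝓝 (sSup (slope q 0 '' Iio 0))) := htend.congr fun z => hslope_eq z
  have hbr : bracket φ ψ = sSup (slope q 0 '' Iio 0) := htend'.limUnder_eq
  rw [hbr, ← hslope_eq]
  exact le_csSup hbdd ⟨h, hh, rfl⟩

lemma le_of_leftDini (f : ℝ → ℝ) (a b : ℝ)
    (hf : ContinuousOn f (Set.Icc a b))
    (H : ∀ x ∈ Set.Ioc a b, ∀ ε > 0, ∃ᶠ z in 𝓝[<] x, f x - f z ≤ ε * (x - z)) :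
    ∀ x ∈ Set.Icc a b, f x ≤ f a := by
  intro x₀ hx₀
  have key : ∀ ε > 0, f x₀ - f a ≤ ε * (x₀ - a) := by
    intro ε hε
    by_contra hcon
    push_neg at hcon
    have hax₀ : a < x₀ := by
      by_contra hle
      push_neg at hle
      have hxa : x₀ = a := le_antisymm hle hx₀.1
      rw [hxa] at hcon
      simp at hcon
    set K := {x ∈ Set.Icc a x₀ | f x₀ - f x ≤ ε * (x₀ - x)} with hK
    have hx₀K : x₀ ∈ K := ⟨⟨hx₀.1, le_rfl⟩, by simp⟩
    have hsub : Set.Icc a x₀ ⊆ Set.Icc a b := Set.Icc_subset_Icc le_rfl hx₀.2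
    have hKclosed : IsClosed K := by
      have hKeq : K = Set.Icc a x₀ ∩ (fun x => f x₀ - f x - ε * (x₀ - x)) ⁻¹' Set.Iic 0 := by
        ext x
        constructor
        · rintro ⟨h1, h2⟩; exact ⟨h1, by simp only [Set.mem_preimage, Set.mem_Iic]; linarith⟩
        · rintro ⟨h1, h2⟩
          simp only [Set.mem_preimage, Set.mem_Iic] at h2
          exact ⟨h1, by linarith⟩
      rw [hKeq]
      refine ContinuousOn.preimage_isClosed_of_isClosed ?_ isClosed_Icc isClosed_Iic
      exact (continuousOn_const.sub (hf.mono hsub)).sub (continuousOn_const.mul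
        (continuousOn_const.sub continuousOn_id))
    have hKbdd : BddBelow K := ⟨a, fun x hx => hx.1.1⟩
    set c := sInf K with hc
    have hcK : c ∈ K := hKclosed.csInf_mem ⟨x₀, hx₀K⟩ hKbdd
    have hac : a < c := by
      rcases lt_or_eq_of_le hcK.1.1 with h | h
      · exact h
      · exfalso
        have h2 := hcK.2
        rw [← h] at h2
        linarith
    have hcb : c ≤ b := le_trans hcK.1.2 hx₀.2
    have hmem : Set.Ioo a c ∈ 𝓝[<] c := Ioo_mem_nhdsLT hac
    obtain ⟨z, hz1, hz2⟩ := ((H c ⟨hac, hcb⟩ ε hε).and_eventually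
      (Filter.eventually_of_mem hmem (fun z hz => hz))).exists
    have hzK : z ∈ K := by
      refine ⟨⟨hz2.1.le, le_trans hz2.2.le hcK.1.2⟩, ?_⟩
      have h3 := hcK.2
      linarith
    have : c ≤ z := csInf_le hKbdd hzK
    linarith [hz2.2]
  by_contra hcon
  push_neg at hcon
  rcases eq_or_lt_of_le hx₀.1 with h | h
  · rw [← h] at hcon; linarith
  · set d := x₀ - a with hd
    have hd0 : 0 < d := by simp [hd]; linarith
    set D := f x₀ - f a with hD
    have hD0 : 0 < D := by simp [hD]; linarith
    have hε : 0 < D / (2 * d) := by positivity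
    have hk := key _ hε
    have heq : D / (2 * d) * d = D / 2 := by
      field_simp
    rw [heq] at hk
    linarith

set_option maxHeartbeats 1600000 in
/-- uniqueness under the one-sided Lipschitz condition.
If `Q` satisfies `[Q[u]-Q[v], u-v] ≤ C‖u-v‖` on `S`, then two continuous
`S`-valued solutions of `u' = Q[u]` on `[0,T]`, differentiable on `(0,T)`,
with the same initial value, coincide on `[0,T]`. -/
theorem stmt18 {E : Type*} [NormedAddCommGroup E] [NormedSpace ℝ E] [CompleteSpace E]
    (T : ℝ) (hT : 0 < T) (S : Set E) (Q : E → E)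
    (C : ℝ) (hC : 0 < C)
    (hLip : ∀ u ∈ S, ∀ v ∈ S, bracket (Q u - Q v) (u - v) ≤ C * ‖u - v‖)
    (u v : ℝ → E)
    (huS : ∀ t ∈ Set.Icc 0 T, u t ∈ S) (hvS : ∀ t ∈ Set.Icc 0 T, v t ∈ S)
    (hcu : ContinuousOn u (Set.Icc 0 T)) (hcv : ContinuousOn v (Set.Icc 0 T))
    (hdu : ∀ t ∈ Set.Ioo 0 T, HasDerivAt u (Q (u t)) t)
    (hdv : ∀ t ∈ Set.Ioo 0 T, HasDerivAt v (Q (v t)) t)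
    (h0 : u 0 = v 0) :
    ∀ t ∈ Set.Icc 0 T, u t = v t := by
  have huv : ∀ t ∈ Set.Ico 0 T, u t = v t := by
    intro t ht
    rcases eq_or_lt_of_le ht.1 with h₁ | h₁
    · rw [← h₁]; exact h0
    have htT : t < T := ht.2
    set f : ℝ → ℝ := fun s => Real.exp (-C * s) * ‖u s - v s‖ with hfdef
    have hsub : Set.Icc 0 t ⊆ Set.Icc (0:ℝ) T := Set.Icc_subset_Icc le_rfl htT.le
    have hcont : ContinuousOn f (Set.Icc 0 t) := by
      apply ContinuousOn.mul
      · exact (Real.continuous_exp.comp (continuous_const.mul continuous_id)).continuousOn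
      · exact ((hcu.mono hsub).sub (hcv.mono hsub)).norm
    have H : ∀ x ∈ Set.Ioc 0 t, ∀ ε > 0, ∃ᶠ z in 𝓝[<] x, f x - f z ≤ ε * (x - z) := by
      intro x hx ε hε
      have hxT : x ∈ Set.Ioo 0 T := ⟨hx.1, lt_of_le_of_lt hx.2 htT⟩
      have hxIcc : x ∈ Set.Icc (0:ℝ) T := ⟨hxT.1.le, hxT.2.le⟩
      set ψ := u x - v x with hψ
      set φ₀ := Q (u x) - Q (v x) with hφ₀
      have hw : HasDerivAt (fun s => u s - v s) φ₀ x := (hdu x hxT).sub (hdv x hxT)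
      have hLx : ∀ h : ℝ, h < 0 → h * (C * ‖ψ‖) ≤ ‖ψ + h • φ₀‖ - ‖ψ‖ := by
        intro h hh
        have h1 : h⁻¹ * (‖ψ + h • φ₀‖ - ‖ψ‖) ≤ C * ‖ψ‖ :=
          le_trans (slope_le_bracket' φ₀ ψ hh) (hLip (u x) (huS x hxIcc) (v x) (hvS x hxIcc))
        have h2 := mul_le_mul_of_nonpos_left h1 hh.le
        have h3 : h * (h⁻¹ * (‖ψ + h • φ₀‖ - ‖ψ‖)) = ‖ψ + h • φ₀‖ - ‖ψ‖ := by
          rw [← mul_assoc, mul_inv_cancel₀ (ne_of_lt hh), one_mul]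
        linarith
      have hε₁ : (0:ℝ) < ε / 2 := by positivity
      have hslope : Tendsto (slope (fun s => u s - v s) x) (𝓝[≠] x) (𝓝 φ₀) :=
        hasDerivAt_iff_tendsto_slope.mp hw
      have hev1 : ∀ᶠ z in 𝓝[<] x, ‖slope (fun s => u s - v s) x z - φ₀‖ < ε / 2 := by
        have hball : ∀ᶠ w in 𝓝 φ₀, ‖w - φ₀‖ < ε / 2 := by
          filter_upwards [Metric.ball_mem_nhds φ₀ hε₁] with w hw'
          rwa [Metric.mem_ball, dist_eq_norm] at hw'
        exact (hslope.mono_left (nhdsWithin_mono x (fun z hz => ne_of_lt hz))).eventually hball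
      have hev2 : ∀ᶠ z in 𝓝[<] x, ‖u x - v x‖ - ε / (2 * C) ≤ ‖u z - v z‖ := by
        have hcw : ContinuousAt (fun s => ‖u s - v s‖) x := hw.continuousAt.norm
        have hlt : ‖u x - v x‖ - ε / (2 * C) < ‖u x - v x‖ := by
          have : (0:ℝ) < ε / (2 * C) := by positivity
          linarith
        exact (hcw.eventually (eventually_ge_nhds hlt)).filter_mono nhdsWithin_le_nhds
      refine Filter.Eventually.frequently ?_
      filter_upwards [hev1, hev2, self_mem_nhdsWithin] with z hz1 hz2 hzx
      have hzx' : z < x := hzx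
      have hzxne : z - x ≠ 0 := by intro hcontra; linarith [sub_eq_zero.mp hcontra]
      -- derivative estimate
      have hslope_smul : (z - x) • slope (fun s => u s - v s) x z = (u z - v z) - ψ := by
        rw [slope]
        rw [smul_smul, mul_inv_cancel₀ hzxne, one_smul]
        simp [hψ, vsub_eq_sub]
      have hderiv : ‖(u z - v z) - (ψ + (z - x) • φ₀)‖ ≤ ε / 2 * (x - z) := by
        have heq : (u z - v z) - (ψ + (z - x) • φ₀)
            = (z - x) • (slope (fun s => u s - v s) x z - φ₀) := by
          have h4 : (z - x) • (slope (fun s => u s - v s) x z - φ₀)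
              = ((u z - v z) - ψ) - (z - x) • φ₀ := by
            rw [smul_sub, hslope_smul]
          rw [h4]; abel
        rw [heq, norm_smul, Real.norm_eq_abs, abs_of_neg (by linarith : z - x < 0)]
        have := hz1.le
        nlinarith [norm_nonneg (slope (fun s => u s - v s) x z - φ₀)]
      have hnormlow : ‖ψ‖ + (z - x) * (C * ‖ψ‖) - ε / 2 * (x - z) ≤ ‖u z - v z‖ := by
        have h1 := hLx (z - x) (by linarith)
        have h2 : ‖ψ + (z - x) • φ₀‖ - ‖u z - v z‖ ≤ ε / 2 * (x - z) := by
          have := norm_sub_norm_le (ψ + (z - x) • φ₀) (u z - v z)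
          have h3 : ‖(ψ + (z - x) • φ₀) - (u z - v z)‖ = ‖(u z - v z) - (ψ + (z - x) • φ₀)‖ :=
            norm_sub_rev _ _
          linarith [hderiv]
        linarith
      -- now the exponential computation
      set A := Real.exp (-C * x) with hA
      set Bz := Real.exp (-C * z) with hB
      have hA0 : 0 < A := Real.exp_pos _
      have hA1 : A ≤ 1 := by
        rw [hA, Real.exp_le_one_iff]
        nlinarith [hxT.1]
      have hBlow : A * (1 + C * (x - z)) ≤ Bz := by
        have h1 : Bz = A * Real.exp (C * (x - z)) := by
          rw [hA, hB, ← Real.exp_add]; ring_nf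
        rw [h1]
        have h2 : 1 + C * (x - z) ≤ Real.exp (C * (x - z)) := by
          have := Real.add_one_le_exp (C * (x - z))
          linarith
        nlinarith
      set gx := ‖ψ‖ with hgx
      set gz := ‖u z - v z‖ with hgz
      have hgz0 : (0:ℝ) ≤ gz := norm_nonneg _
      have hxz : (0:ℝ) < x - z := by linarith
      have hi : gx - gz ≤ (C * gx + ε / 2) * (x - z) := by nlinarith [hnormlow]
      have hii : C * gx - ε / 2 ≤ C * gz := by
        have h1 := mul_le_mul_of_nonneg_left hz2 hC.le
        have h2 : C * (ε / (2 * C)) = ε / 2 := by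
          field_simp
        nlinarith
      have t1 : A * (1 + C * (x - z)) * gz ≤ Bz * gz := mul_le_mul_of_nonneg_right hBlow hgz0
      have t2 : A * (gx - gz) ≤ A * ((C * gx + ε / 2) * (x - z)) :=
        mul_le_mul_of_nonneg_left hi hA0.le
      have t3 : A * (x - z) * (C * gx - ε / 2) ≤ A * (x - z) * (C * gz) :=
        mul_le_mul_of_nonneg_left hii (by positivity)
      have t4 : 0 ≤ (1 - A) * (ε * (x - z)) :=
        mul_nonneg (by linarith) (by positivity)
      show A * gx - Bz * gz ≤ ε * (x - z)
      linarith [t1, t2, t3, t4]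
    have hle := le_of_leftDini f 0 t hcont H t ⟨ht.1, le_rfl⟩
    have hf0 : f 0 = 0 := by simp [hfdef, h0]
    rw [hf0] at hle
    have hexp : 0 < Real.exp (-C * t) := Real.exp_pos _
    have hnorm : ‖u t - v t‖ ≤ 0 := by
      by_contra hpos
      push_neg at hpos
      have : 0 < f t := mul_pos hexp hpos
      linarith
    have : u t - v t = 0 := norm_le_zero_iff.mp hnorm
    exact sub_eq_zero.mp this
  intro t ht
  rcases lt_or_eq_of_le ht.2 with h | h
  · exact huv t ⟨ht.1, h⟩
  · subst h
    have hne : (𝓝[Set.Ioo 0 t] t).NeBot := by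
      rw [← mem_closure_iff_nhdsWithin_neBot, closure_Ioo (ne_of_lt hT)]
      exact ⟨hT.le, le_rfl⟩
    have hu' : Tendsto u (𝓝[Set.Ioo 0 t] t) (𝓝 (u t)) :=
      (hcu t ht).mono_left (nhdsWithin_mono t Set.Ioo_subset_Icc_self)
    have hv' : Tendsto v (𝓝[Set.Ioo 0 t] t) (𝓝 (v t)) :=
      (hcv t ht).mono_left (nhdsWithin_mono t Set.Ioo_subset_Icc_self)
    have heq : u =ᶠ[𝓝[Set.Ioo 0 t] t] v :=
      Filter.eventually_of_mem self_mem_nhdsWithin (fun s hs => huv s ⟨hs.1.le, hs.2⟩)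
    exact tendsto_nhds_unique (hu'.congr' heq) hv'
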